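/- Let z, ζ ∈ ℝ² with |z−ζ| ≥ |t−τ−2z∧ζ|^{1/2}, and suppose z ≠ ζ. Then the set {θ ∈ [0,π) : |π_{V_θ^⊥}(z−ζ)| ≤ δ} is contained in at most two intervals each of length at most Cδ/|z−ζ| for an absolute constant C, and consequently {θ : d_ℍ(P_{V_θ^⊥}(v), P_{V_θ^⊥}(w)) ≤ δ} (with v=(z,t), w=(ζ,τ)) is contained in at most two intervals each of length ≲ δ/d_ℍ(v,w). -/

import Mathlib

/-!
Write `z - ζ = r e^{iψ}`; then `|π_{V_θ^⊥}(z - ζ)| = r |sin (θ - φ)|` with `φ ≡ ψ (mod π)`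
chosen in `[-π/2, π/2]`. Jordan's inequality `|x| ≤ (π/2) |sin x|` on `[-π/2, π/2]`, applied
to `θ - φ` or `θ - φ - π`, confines the angles with `r |sin (θ - φ)| ≤ δ` to the two intervals
of radius `πδ/(2r)` around `φ` and `φ + π`. For the vertical projections, the Korányi distance
dominates the horizontal one, and the hypothesis gives `d_ℍ(v, w) ≤ 2r`.
-/

open Real MeasureTheory

noncomputable section

/-- Points of the plane. -/
abbrev Pt := ℝ × ℝ
/-- Points of the Heisenberg group ℍ ≅ ℂ × ℝ ≅ ℝ² × ℝ. -/
abbrev Heis := (ℝ × ℝ) × ℝ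

/-- Wedge product on ℝ². -/
def wedge (z w : Pt) : ℝ := z.1 * w.2 - z.2 * w.1

/-- Euclidean inner product on ℝ². -/
def dotP (z w : Pt) : ℝ := z.1 * w.1 + z.2 * w.2

/-- Euclidean norm on ℝ². -/
def nrm (z : Pt) : ℝ := Real.sqrt (z.1 ^ 2 + z.2 ^ 2)

/-- The unit vector e^{iθ} = (cos θ, sin θ). -/
def eV (θ : ℝ) : Pt := (Real.cos θ, Real.sin θ)

/-- The unit vector i·e^{iθ} = (−sin θ, cos θ). -/
def ieV (θ : ℝ) : Pt := (-Real.sin θ, Real.cos θ)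

/-- Orthogonal projection onto the line V_θ spanned by e^{iθ}. -/
def projV (θ : ℝ) (z : Pt) : Pt := (dotP z (eV θ)) • eV θ

/-- Orthogonal projection onto the orthogonal complement V_θ^⊥, spanned by i·e^{iθ}. -/
def projVperp (θ : ℝ) (z : Pt) : Pt := (dotP z (ieV θ)) • ieV θ

/-- Heisenberg group law. -/
def hmul (v w : Heis) : Heis := (v.1 + w.1, v.2 + w.2 - 2 * wedge v.1 w.1)

/-- Heisenberg group inverse. -/
def hinv (v : Heis) : Heis := (-v.1, -v.2)

/-- Korányi norm ‖(z,t)‖ = (|z|⁴ + t²)^{1/4}. -/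
def Knorm (v : Heis) : ℝ := ((nrm v.1) ^ 4 + v.2 ^ 2) ^ ((1 : ℝ) / 4)

/-- Korányi distance (via the explicit second-component formula). -/
def dH (v w : Heis) : ℝ :=
  ((nrm (v.1 - w.1)) ^ 4 + (v.2 - w.2 - 2 * wedge v.1 w.1) ^ 2) ^ ((1 : ℝ) / 4)

/-- Horizontal projection P_{V_θ}. -/
def PV (θ : ℝ) (v : Heis) : Heis := (projV θ v.1, 0)

/-- Vertical projection P_{V_θ^⊥}. -/
def PVperp (θ : ℝ) (v : Heis) : Heis :=
  (projVperp θ v.1, v.2 - 2 * wedge (projV θ v.1) (projVperp θ v.1))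

open Set

lemma abs_le_pi_div_two_mul_abs_sin {x : ℝ} (hx : |x| ≤ π / 2) : |x| ≤ π / 2 * |sin x| := by
  have hπ := pi_pos
  calc |x| = π / 2 * (2 / π * |x|) := by field_simp
    _ ≤ π / 2 * |sin x| := by gcongr; exact mul_abs_le_abs_sin hx

lemma abs_le_or_abs_sub_pi_le_of_abs_sin_le {x s : ℝ} (hx : x ∈ Icc (-(π / 2)) (3 * π / 2))
    (h : |sin x| ≤ s) : |x| ≤ π / 2 * s ∨ |x - π| ≤ π / 2 * s := by
  rcases le_or_gt x (π / 2) with hle | hgt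
  · left
    calc |x| ≤ π / 2 * |sin x| := abs_le_pi_div_two_mul_abs_sin (abs_le.2 ⟨hx.1, hle⟩)
      _ ≤ π / 2 * s := by gcongr
  · right
    have hx' : |x - π| ≤ π / 2 := abs_le.2 ⟨by linarith, by linarith [hx.2]⟩
    calc |x - π| ≤ π / 2 * |sin (x - π)| := abs_le_pi_div_two_mul_abs_sin hx'
      _ = π / 2 * |sin x| := by rw [sin_sub_pi, abs_neg]
      _ ≤ π / 2 * s := by gcongr

def CoveredByTwoIntervals (S : Set ℝ) (ℓ : ℝ) : Prop :=
  ∃ a₁ b₁ a₂ b₂ : ℝ, S ⊆ Icc a₁ b₁ ∪ Icc a₂ b₂ ∧ b₁ - a₁ ≤ ℓ ∧ b₂ - a₂ ≤ ℓ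

lemma CoveredByTwoIntervals.mono {S T : Set ℝ} {ℓ ℓ' : ℝ} (h : CoveredByTwoIntervals T ℓ)
    (hST : S ⊆ T) (hℓ : ℓ ≤ ℓ') : CoveredByTwoIntervals S ℓ' :=
  let ⟨a₁, b₁, a₂, b₂, hT, h₁, h₂⟩ := h
  ⟨a₁, b₁, a₂, b₂, hST.trans hT, h₁.trans hℓ, h₂.trans hℓ⟩

lemma coveredByTwoIntervals_abs_sin_sub_le {φ : ℝ} (hφ : φ ∈ Icc (-(π / 2)) (π / 2)) (s : ℝ) :
    CoveredByTwoIntervals {θ ∈ Ico 0 π | |sin (θ - φ)| ≤ s} (π * s) := by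
  refine ⟨φ - π / 2 * s, φ + π / 2 * s, φ + π - π / 2 * s, φ + π + π / 2 * s, ?_,
    by linarith, by linarith⟩
  rintro θ ⟨hθ, hsin⟩
  have hx : θ - φ ∈ Icc (-(π / 2)) (3 * π / 2) :=
    ⟨by linarith [hθ.1, hφ.2], by linarith [hθ.2, hφ.1]⟩
  rcases abs_le_or_abs_sub_pi_le_of_abs_sin_le hx hsin with h | h
  · obtain ⟨h₁, h₂⟩ := abs_le.1 h
    exact Or.inl ⟨by linarith, by linarith⟩
  · obtain ⟨h₁, h₂⟩ := abs_le.1 h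
    exact Or.inr ⟨by linarith, by linarith⟩

lemma nrm_eq_norm (p : Pt) : nrm p = ‖(⟨p.1, p.2⟩ : ℂ)‖ := by
  rw [Complex.norm_def, Complex.normSq_mk, nrm]
  ring_nf

lemma nrm_nonneg (p : Pt) : 0 ≤ nrm p := sqrt_nonneg _

lemma nrm_pos {p : Pt} (hp : p ≠ 0) : 0 < nrm p := by
  rw [nrm_eq_norm]
  exact norm_pos_iff.2 fun h => hp (Prod.ext (congrArg Complex.re h) (congrArg Complex.im h))

lemma nrm_projVperp (θ : ℝ) (p : Pt) : nrm (projVperp θ p) = |dotP p (ieV θ)| := by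
  simp only [projVperp, nrm, ieV, Prod.smul_mk, smul_eq_mul]
  rw [show (dotP p (-sin θ, cos θ) * -sin θ) ^ 2 + (dotP p (-sin θ, cos θ) * cos θ) ^ 2 =
      dotP p (-sin θ, cos θ) ^ 2 * (sin θ ^ 2 + cos θ ^ 2) by ring,
    sin_sq_add_cos_sq, mul_one, sqrt_sq_eq_abs]

lemma projVperp_sub (θ : ℝ) (z ζ : Pt) :
    projVperp θ (z - ζ) = projVperp θ z - projVperp θ ζ := by
  simp only [projVperp, dotP, Prod.fst_sub, Prod.snd_sub, ← sub_smul]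
  ring_nf

lemma dotP_ieV (p : Pt) (θ : ℝ) :
    dotP p (ieV θ) = nrm p * sin (Complex.arg ⟨p.1, p.2⟩ - θ) := by
  rw [sin_sub, nrm_eq_norm, mul_sub, ← mul_assoc, ← mul_assoc, Complex.norm_mul_sin_arg,
    Complex.norm_mul_cos_arg, dotP, ieV]
  ring

/-- Replacing `p` by `-p` if necessary puts the argument of `p` in `[-π/2, π/2]`. -/
lemma exists_abs_dotP_ieV_eq (p : Pt) :
    ∃ φ ∈ Icc (-(π / 2)) (π / 2), ∀ θ, |dotP p (ieV θ)| = nrm p * |sin (θ - φ)| := by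
  wlog hp : 0 ≤ p.1 generalizing p
  · obtain ⟨φ, hφ, h⟩ := this (-p) (by simp only [Prod.fst_neg]; linarith)
    refine ⟨φ, hφ, fun θ => ?_⟩
    have hdot : dotP (-p) (ieV θ) = -dotP p (ieV θ) := by
      simp only [dotP, Prod.fst_neg, Prod.snd_neg]
      ring
    have hnrm : nrm (-p) = nrm p := by simp only [nrm, Prod.fst_neg, Prod.snd_neg, neg_sq]
    rw [← abs_neg, ← hdot, h θ, hnrm]
  refine ⟨Complex.arg ⟨p.1, p.2⟩, abs_le.1 (Complex.abs_arg_le_pi_div_two_iff.2 hp), fun θ => ?_⟩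
  rw [dotP_ieV, abs_mul, abs_of_nonneg (nrm_nonneg p), ← neg_sub θ, sin_neg, abs_neg]

lemma coveredByTwoIntervals_nrm_projVperp_le {p : Pt} (hp : p ≠ 0) (δ : ℝ) :
    CoveredByTwoIntervals {θ ∈ Ico 0 π | nrm (projVperp θ p) ≤ δ} (π * δ / nrm p) := by
  obtain ⟨φ, hφ, hdot⟩ := exists_abs_dotP_ieV_eq p
  refine (coveredByTwoIntervals_abs_sin_sub_le hφ (δ / nrm p)).mono ?_
    (mul_div_assoc π δ (nrm p)).ge
  rintro θ ⟨hθ, hle⟩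
  refine ⟨hθ, ?_⟩
  rwa [le_div_iff₀ (nrm_pos hp), mul_comm, ← hdot, ← nrm_projVperp]

lemma le_dH_iff {v w : Heis} {R : ℝ} (hR : 0 ≤ R) :
    R ≤ dH v w ↔ R ^ 4 ≤ nrm (v.1 - w.1) ^ 4 + (v.2 - w.2 - 2 * wedge v.1 w.1) ^ 2 := by
  rw [dH, one_div, le_rpow_inv_iff_of_pos hR (by positivity) (by norm_num)]
  norm_cast

lemma dH_le_iff {v w : Heis} {R : ℝ} (hR : 0 ≤ R) :
    dH v w ≤ R ↔ nrm (v.1 - w.1) ^ 4 + (v.2 - w.2 - 2 * wedge v.1 w.1) ^ 2 ≤ R ^ 4 := by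
  rw [dH, one_div, rpow_inv_le_iff_of_pos (by positivity) hR (by norm_num)]
  norm_cast

lemma nrm_le_dH (v w : Heis) : nrm (v.1 - w.1) ≤ dH v w :=
  (le_dH_iff (nrm_nonneg _)).2 (le_add_of_nonneg_right (sq_nonneg _))

lemma dH_le_two_mul_nrm {v w : Heis}
    (h : |v.2 - w.2 - 2 * wedge v.1 w.1| ^ ((1 : ℝ) / 2) ≤ nrm (v.1 - w.1)) :
    dH v w ≤ 2 * nrm (v.1 - w.1) := by
  set r := nrm (v.1 - w.1)
  set c := v.2 - w.2 - 2 * wedge v.1 w.1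
  have hr : 0 ≤ r := nrm_nonneg _
  have hc : |c| ≤ r ^ 2 := by
    rw [← sqrt_eq_rpow] at h
    calc |c| = sqrt |c| ^ 2 := (sq_sqrt (abs_nonneg c)).symm
      _ ≤ r ^ 2 := by gcongr
  have hc2 : c ^ 2 ≤ r ^ 4 := by
    rw [← sq_abs, show r ^ 4 = (r ^ 2) ^ 2 by ring]
    gcongr
  rw [dH_le_iff (by positivity)]
  nlinarith [pow_nonneg hr 4]

lemma nrm_projVperp_sub_le_dH (θ : ℝ) (v w : Heis) :
    nrm (projVperp θ (v.1 - w.1)) ≤ dH (PVperp θ v) (PVperp θ w) := by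
  rw [projVperp_sub]
  exact nrm_le_dH (PVperp θ v) (PVperp θ w)

/-- The easy case of the transversality lemma, when |z−ζ| ≥ |t−τ−2z∧ζ|^{1/2}. -/
theorem stmt_15 :
    ∃ C : ℝ, 0 < C ∧ ∀ z ζ : Pt, ∀ t τ δ : ℝ, 0 < δ → z ≠ ζ →
      nrm (z - ζ) ≥ |t - τ - 2 * wedge z ζ| ^ ((1 : ℝ) / 2) →
      (∃ a₁ b₁ a₂ b₂ : ℝ,
        {θ ∈ Set.Ico 0 Real.pi | nrm (projVperp θ (z - ζ)) ≤ δ} ⊆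
          Set.Icc a₁ b₁ ∪ Set.Icc a₂ b₂ ∧
        b₁ - a₁ ≤ C * δ / nrm (z - ζ) ∧ b₂ - a₂ ≤ C * δ / nrm (z - ζ)) ∧
      (∃ a₁ b₁ a₂ b₂ : ℝ,
        {θ ∈ Set.Ico 0 Real.pi |
            dH (PVperp θ (z, t)) (PVperp θ (ζ, τ)) ≤ δ} ⊆
          Set.Icc a₁ b₁ ∪ Set.Icc a₂ b₂ ∧
        b₁ - a₁ ≤ C * δ / dH (z, t) (ζ, τ) ∧ b₂ - a₂ ≤ C * δ / dH (z, t) (ζ, τ)) := by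
  refine ⟨2 * π, by positivity, fun z ζ t τ δ hδ hzζ hc => ?_⟩
  have hp : z - ζ ≠ 0 := sub_ne_zero.2 hzζ
  have hr := nrm_pos hp
  have hcover := coveredByTwoIntervals_nrm_projVperp_le hp δ
  refine ⟨hcover.mono subset_rfl ?_, hcover.mono ?_ ?_⟩
  · have hπ := pi_pos
    gcongr
    linarith
  · rintro θ ⟨hθ, hle⟩
    exact ⟨hθ, (nrm_projVperp_sub_le_dH θ (z, t) (ζ, τ)).trans hle⟩
  · have hdH : 0 < dH (z, t) (ζ, τ) := hr.trans_le (nrm_le_dH (z, t) (ζ, τ))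
    calc π * δ / nrm (z - ζ) = 2 * π * δ / (2 * nrm (z - ζ)) := by field_simp
      _ ≤ 2 * π * δ / dH (z, t) (ζ, τ) := by gcongr; exact dH_le_two_mul_nrm hc
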